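/- Let p, q be smooth functions of (t₁,t₂) and let a be a smooth SL(2,ℂ)-valued function satisfying ∂₁a·a⁻¹ + a(pE + qF)a⁻¹ = 0 and ∂₂a·a⁻¹ + a·Q₂·a⁻¹ = 0 where Q₂ = p₂E + h₂H + q₂F with p₂ = (1/2)∂₁p, q₂ = −(1/2)∂₁q, h₂ = −(1/2)pq. Then S := a·H·a⁻¹ satisfies the Heisenberg ferromagnet equation 4∂₂S = [S, ∂₁²S], provided (p,q) solves the AKNS t₂-flow 2∂₂p = ∂₁²p − 2p²q, 2∂₂q = −∂₁²q + 2pq². -/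

import Mathlib

noncomputable section

abbrev M2 := Matrix (Fin 2) (Fin 2) ℂ

/-- Entrywise partial derivative in the first variable. -/
def mD1 (S : ℝ → ℝ → M2) : ℝ → ℝ → M2 :=
  fun x y => Matrix.of fun i j => deriv (fun s => S s y i j) x

/-- Entrywise partial derivative in the second variable. -/
def mD2 (S : ℝ → ℝ → M2) : ℝ → ℝ → M2 :=
  fun x y => Matrix.of fun i j => deriv (fun s => S x s i j) y

def d1 (f : ℝ → ℝ → ℂ) : ℝ → ℝ → ℂ := fun x y => deriv (fun s => f s y) x

def Em : M2 := !![0, 1; 0, 0]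
def Fm : M2 := !![0, 0; 1, 0]
def Hm : M2 := !![1, 0; 0, -1]

/-- The level-two AKNS potential matrix `Q₂ = p₂E + h₂H + q₂F`. -/
def Q2 (p q : ℝ → ℝ → ℂ) (x y : ℝ) : M2 :=
  ((1 / 2 : ℂ) * d1 p x y) • Em + (-(1 / 2 : ℂ) * p x y * q x y) • Hm +
    (-(1 / 2 : ℂ) * d1 q x y) • Fm

/-! ### Auxiliary lemmas -/

lemma mat_entry_hasDeriv1 {f : ℝ → ℝ → ℂ}
    (hf : ContDiff ℝ (⊤ : ℕ∞) (fun z : ℝ × ℝ => f z.1 z.2)) (x y : ℝ) :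
    HasDerivAt (fun s => f s y) (d1 f x y) x := by
  have hd : DifferentiableAt ℝ (fun s => f s y) x := by
    have h1 : Differentiable ℝ (fun z : ℝ × ℝ => f z.1 z.2) := hf.differentiable (by simp)
    have h2 : Differentiable ℝ (fun s : ℝ => ((s, y) : ℝ × ℝ)) :=
      differentiable_id.prodMk (differentiable_const y)
    exact (h1.comp h2).differentiableAt
  simpa [d1] using hd.hasDerivAt

lemma mat_entry_diff2 {f : ℝ → ℝ → ℂ}
    (hf : ContDiff ℝ (⊤ : ℕ∞) (fun z : ℝ × ℝ => f z.1 z.2)) (x y : ℝ) :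
    HasDerivAt (fun t => f x t) (deriv (fun t => f x t) y) y := by
  have hd : DifferentiableAt ℝ (fun t => f x t) y := by
    have h1 : Differentiable ℝ (fun z : ℝ × ℝ => f z.1 z.2) := hf.differentiable (by simp)
    have h2 : Differentiable ℝ (fun t : ℝ => ((x, t) : ℝ × ℝ)) :=
      (differentiable_const x).prodMk differentiable_id
    exact (h1.comp h2).differentiableAt
  exact hd.hasDerivAt

lemma matMul_deriv {A B : ℝ → M2} {A' B' : M2} {x : ℝ}
    (hA : ∀ i j, HasDerivAt (fun s => A s i j) (A' i j) x)
    (hB : ∀ i j, HasDerivAt (fun s => B s i j) (B' i j) x) (i j : Fin 2) :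
    HasDerivAt (fun s => (A s * B s) i j) ((A' * B x + A x * B') i j) x := by
  have e1 : (fun s => (A s * B s) i j) = fun s => A s i 0 * B s 0 j + A s i 1 * B s 1 j := by
    funext s; simp [Matrix.mul_apply, Fin.sum_univ_two]
  have e2 : (A' * B x + A x * B') i j
      = (A' i 0 * B x 0 j + A x i 0 * B' 0 j) + (A' i 1 * B x 1 j + A x i 1 * B' 1 j) := by
    simp [Matrix.mul_apply, Fin.sum_univ_two, Matrix.add_apply]; ring
  rw [e1, e2]
  exact ((hA i 0).mul (hB 0 j)).add ((hA i 1).mul (hB 1 j))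

lemma matMul3_deriv {A B C : ℝ → M2} {A' B' C' : M2} {x : ℝ}
    (hA : ∀ i j, HasDerivAt (fun s => A s i j) (A' i j) x)
    (hB : ∀ i j, HasDerivAt (fun s => B s i j) (B' i j) x)
    (hC : ∀ i j, HasDerivAt (fun s => C s i j) (C' i j) x) (i j : Fin 2) :
    HasDerivAt (fun s => (A s * B s * C s) i j)
      ((A' * B x * C x + A x * B' * C x + A x * B x * C') i j) x := by
  have h := matMul_deriv (matMul_deriv hA hB) hC i j
  have e : (A' * B x + A x * B') * C x + (A x * B x) * C'
      = A' * B x * C x + A x * B' * C x + A x * B x * C' := by noncomm_ring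
  rw [← e]; exact h

lemma adjEntry_deriv {A : ℝ → M2} {V : M2} {x : ℝ}
    (hA : ∀ i j, HasDerivAt (fun s => A s i j) ((-(A x * V)) i j) x)
    (hV : V 1 1 = -(V 0 0)) :
    ∀ i j, HasDerivAt (fun s => (A s).adjugate i j) ((V * (A x).adjugate) i j) x := by
  have e : ∀ (B : M2), B.adjugate = !![B 1 1, -(B 0 1); -(B 1 0), B 0 0] :=
    fun B => B.adjugate_fin_two
  intro i j
  fin_cases i <;> fin_cases j <;>
    simp only [e, Matrix.cons_val', Matrix.cons_val_zero, Matrix.cons_val_one,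
      Matrix.head_cons, Matrix.head_fin_const, Matrix.empty_val', Matrix.cons_val_fin_one,
      Fin.isValue, Fin.zero_eta, Fin.mk_one, Matrix.of_apply]
  · have h := hA 1 1
    convert h using 1
    simp [Matrix.mul_apply, Fin.sum_univ_two, Matrix.neg_apply]
    linear_combination (A x 1 1) * hV
  · have h := (hA 0 1).fun_neg
    convert h using 1
    · rfl
    simp [Matrix.mul_apply, Fin.sum_univ_two, Matrix.neg_apply]
    linear_combination -(A x 0 1) * hV
  · have h := (hA 1 0).fun_neg
    convert h using 1
    · rfl
    simp [Matrix.mul_apply, Fin.sum_univ_two, Matrix.neg_apply]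
    linear_combination -(A x 1 0) * hV
  · have h := hA 0 0
    convert h using 1
    simp [Matrix.mul_apply, Fin.sum_univ_two, Matrix.neg_apply]
    linear_combination (A x 0 0) * hV

def Q1m (p q : ℝ → ℝ → ℂ) (x y : ℝ) : M2 := p x y • Em + q x y • Fm

lemma Q1comm_entry (f g : ℝ → ℝ → ℂ) (u v : ℝ) (i j : Fin 2) :
    (Hm * Q1m f g u v - Q1m f g u v * Hm) i j
      = f u v * ((Hm * Em - Em * Hm) i j) + g u v * ((Hm * Fm - Fm * Hm) i j) := by
  simp [Q1m, Matrix.mul_add, Matrix.add_mul, Matrix.mul_smul, Matrix.smul_mul,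
    Matrix.sub_apply, Matrix.add_apply, Matrix.smul_apply, smul_eq_mul]
  ring

lemma key_identity (P Q P' Q' : ℂ) (Q1 Q1' Qt M X0 : M2)
    (h1 : Q1 = P • Em + Q • Fm) (h2 : Q1' = P' • Em + Q' • Fm)
    (h3 : Qt = ((1 / 2 : ℂ) * P') • Em + (-(1 / 2 : ℂ) * P * Q) • Hm + (-(1 / 2 : ℂ) * Q') • Fm)
    (h4 : M = Hm * Q1 - Q1 * Hm)
    (h5 : X0 = -(Q1 * M) + (Hm * Q1' - Q1' * Hm) + M * Q1) :
    (4 : ℂ) • (Hm * Qt - Qt * Hm) = Hm * X0 - X0 * Hm := by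
  subst h1 h2 h3 h4 h5
  ext i j
  fin_cases i <;> fin_cases j <;>
    simp [Em, Fm, Hm, Matrix.mul_apply, Fin.sum_univ_two, Matrix.smul_apply,
      Matrix.add_apply, Matrix.sub_apply, Matrix.neg_apply, smul_eq_mul] <;>
    ring

/-- If `a` solves the AKNS Lax equations for `(p,q)` solving the AKNS
`t₂`-flow, then `S := aHa⁻¹` solves the Heisenberg ferromagnet equation
`4∂₂S = [S, ∂₁²S]`. -/
theorem lax_to_heisenberg (p q : ℝ → ℝ → ℂ) (a : ℝ → ℝ → M2)
    (hp : ContDiff ℝ (⊤ : ℕ∞) (fun z : ℝ × ℝ => p z.1 z.2))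
    (hq : ContDiff ℝ (⊤ : ℕ∞) (fun z : ℝ × ℝ => q z.1 z.2))
    (ha : ∀ i j, ContDiff ℝ (⊤ : ℕ∞) (fun z : ℝ × ℝ => a z.1 z.2 i j))
    (hdet : ∀ x y, (a x y).det = 1)
    (hlax1 : ∀ x y, mD1 a x y * (a x y)⁻¹ +
      a x y * (p x y • Em + q x y • Fm) * (a x y)⁻¹ = 0)
    (hlax2 : ∀ x y, mD2 a x y * (a x y)⁻¹ + a x y * Q2 p q x y * (a x y)⁻¹ = 0)
    (hak1 : ∀ x y, 2 * deriv (fun s => p x s) y =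
      d1 (d1 p) x y - 2 * (p x y) ^ 2 * q x y)
    (hak2 : ∀ x y, 2 * deriv (fun s => q x s) y =
      -d1 (d1 q) x y + 2 * p x y * (q x y) ^ 2) :
    ∀ x y, (4 : ℂ) • mD2 (fun s t => a s t * Hm * (a s t)⁻¹) x y =
      (a x y * Hm * (a x y)⁻¹) * mD1 (mD1 (fun s t => a s t * Hm * (a s t)⁻¹)) x y -
        mD1 (mD1 (fun s t => a s t * Hm * (a s t)⁻¹)) x y *
          (a x y * Hm * (a x y)⁻¹) := by
  have hinv : ∀ s t, (a s t)⁻¹ = (a s t).adjugate := by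
    intro s t; rw [Matrix.inv_def, hdet, Ring.inverse_one, one_smul]
  have hba : ∀ s t, (a s t).adjugate * a s t = 1 := by
    intro s t
    rw [← hinv]
    exact Matrix.nonsing_inv_mul _ (by rw [hdet]; exact isUnit_one)
  -- Lax equations solved for the derivatives of `a`
  have hd1a : ∀ s t, mD1 a s t = -(a s t * Q1m p q s t) := by
    intro s t
    have h := congrArg (fun M : M2 => M * a s t) (hlax1 s t)
    simp only [hinv, add_mul, zero_mul, mul_assoc, hba, mul_one] at h
    rw [Q1m]
    exact eq_neg_of_add_eq_zero_left h
  have hd2a : ∀ s t, mD2 a s t = -(a s t * Q2 p q s t) := by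
    intro s t
    have h := congrArg (fun M : M2 => M * a s t) (hlax2 s t)
    simp only [hinv, add_mul, zero_mul, mul_assoc, hba, mul_one] at h
    exact eq_neg_of_add_eq_zero_left h
  -- entrywise derivatives of `a`
  have hAd1 : ∀ s t i j, HasDerivAt (fun u => a u t i j) ((-(a s t * Q1m p q s t)) i j) s := by
    intro s t i j
    have h0 := mat_entry_hasDeriv1 (f := fun u v => a u v i j) (ha i j) s t
    have e : d1 (fun u v => a u v i j) s t = (-(a s t * Q1m p q s t)) i j := by
      rw [← hd1a]; rfl
    rwa [e] at h0
  have hAd2 : ∀ s t i j, HasDerivAt (fun v => a s v i j) ((-(a s t * Q2 p q s t)) i j) t := by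
    intro s t i j
    have h0 := mat_entry_diff2 (f := fun u v => a u v i j) (ha i j) s t
    have e : deriv (fun v => a s v i j) t = (-(a s t * Q2 p q s t)) i j := by
      rw [← hd2a]; rfl
    rwa [e] at h0
  -- entrywise derivatives of the adjugate
  have hBd1 : ∀ s t i j, HasDerivAt (fun u => (a u t).adjugate i j)
      ((Q1m p q s t * (a s t).adjugate) i j) s := by
    intro s t
    exact adjEntry_deriv (hAd1 s t) (by simp [Q1m, Em, Fm])
  have hBd2 : ∀ s t i j, HasDerivAt (fun v => (a s v).adjugate i j)
      ((Q2 p q s t * (a s t).adjugate) i j) t := by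
    intro s t
    exact adjEntry_deriv (hAd2 s t) (by simp [Q2, Em, Fm, Hm])
  -- first derivative of S
  have hS1 : ∀ s t, mD1 (fun u v => a u v * Hm * (a u v).adjugate) s t
      = a s t * (Hm * Q1m p q s t - Q1m p q s t * Hm) * (a s t).adjugate := by
    intro s t
    ext i j
    have hBconst : ∀ i j : Fin 2, HasDerivAt (fun _ : ℝ => Hm i j) ((0 : M2) i j) s := by
      intro i j
      simpa using hasDerivAt_const s (Hm i j)
    have h := matMul3_deriv (hAd1 s t) hBconst (hBd1 s t) i j
    have e : -(a s t * Q1m p q s t) * Hm * (a s t).adjugate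
          + a s t * 0 * (a s t).adjugate
          + a s t * Hm * (Q1m p q s t * (a s t).adjugate)
        = a s t * (Hm * Q1m p q s t - Q1m p q s t * Hm) * (a s t).adjugate := by
      noncomm_ring
    rw [e] at h
    exact h.deriv
  -- second derivative of S
  have hMd : ∀ s t i j, HasDerivAt
      (fun u => (Hm * Q1m p q u t - Q1m p q u t * Hm) i j)
      ((Hm * Q1m (d1 p) (d1 q) s t - Q1m (d1 p) (d1 q) s t * Hm) i j) s := by
    intro s t i j
    simp only [Q1comm_entry]
    exact ((mat_entry_hasDeriv1 hp s t).mul_const _).add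
      ((mat_entry_hasDeriv1 hq s t).mul_const _)
  have hDD : ∀ s t, mD1 (mD1 (fun u v => a u v * Hm * (a u v).adjugate)) s t
      = a s t * (-(Q1m p q s t * (Hm * Q1m p q s t - Q1m p q s t * Hm))
          + (Hm * Q1m (d1 p) (d1 q) s t - Q1m (d1 p) (d1 q) s t * Hm)
          + (Hm * Q1m p q s t - Q1m p q s t * Hm) * Q1m p q s t) * (a s t).adjugate := by
    intro s t
    ext i j
    have hfun : (fun u => mD1 (fun u v => a u v * Hm * (a u v).adjugate) u t i j)
        = fun u => (a u t * (Hm * Q1m p q u t - Q1m p q u t * Hm) * (a u t).adjugate) i j := by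
      funext u; rw [hS1]
    have h := matMul3_deriv (hAd1 s t) (hMd s t) (hBd1 s t) i j
    have e : -(a s t * Q1m p q s t) * (Hm * Q1m p q s t - Q1m p q s t * Hm) * (a s t).adjugate
          + a s t * (Hm * Q1m (d1 p) (d1 q) s t - Q1m (d1 p) (d1 q) s t * Hm) * (a s t).adjugate
          + a s t * (Hm * Q1m p q s t - Q1m p q s t * Hm) * (Q1m p q s t * (a s t).adjugate)
        = a s t * (-(Q1m p q s t * (Hm * Q1m p q s t - Q1m p q s t * Hm))
            + (Hm * Q1m (d1 p) (d1 q) s t - Q1m (d1 p) (d1 q) s t * Hm)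
            + (Hm * Q1m p q s t - Q1m p q s t * Hm) * Q1m p q s t) * (a s t).adjugate := by
      noncomm_ring
    rw [e] at h
    show deriv (fun u => mD1 (fun u v => a u v * Hm * (a u v).adjugate) u t i j) s = _
    rw [hfun]
    exact h.deriv
  -- t₂ derivative of S
  have hS2 : ∀ s t, mD2 (fun u v => a u v * Hm * (a u v).adjugate) s t
      = a s t * (Hm * Q2 p q s t - Q2 p q s t * Hm) * (a s t).adjugate := by
    intro s t
    ext i j
    have hBconst : ∀ i j : Fin 2, HasDerivAt (fun _ : ℝ => Hm i j) ((0 : M2) i j) t := by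
      intro i j
      simpa using hasDerivAt_const t (Hm i j)
    have h := matMul3_deriv (hAd2 s t) hBconst (hBd2 s t) i j
    have e : -(a s t * Q2 p q s t) * Hm * (a s t).adjugate
          + a s t * 0 * (a s t).adjugate
          + a s t * Hm * (Q2 p q s t * (a s t).adjugate)
        = a s t * (Hm * Q2 p q s t - Q2 p q s t * Hm) * (a s t).adjugate := by
      noncomm_ring
    rw [e] at h
    exact h.deriv
  -- conclusion
  intro x y
  have hfun2 : (fun s t => a s t * Hm * (a s t)⁻¹)
      = fun s t => a s t * Hm * (a s t).adjugate := by
    funext s t; rw [hinv]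
  rw [hfun2, hinv, hS2 x y, hDD x y]
  have cancel : ∀ U V : M2,
      (a x y * U * (a x y).adjugate) * (a x y * V * (a x y).adjugate)
        = a x y * (U * V) * (a x y).adjugate := by
    intro U V
    calc (a x y * U * (a x y).adjugate) * (a x y * V * (a x y).adjugate)
        = a x y * U * (((a x y).adjugate * a x y) * (V * (a x y).adjugate)) := by noncomm_ring
      _ = a x y * (U * V) * (a x y).adjugate := by rw [hba]; noncomm_ring
  rw [cancel, cancel]
  have combine : ∀ W1 W2 : M2, a x y * W1 * (a x y).adjugate - a x y * W2 * (a x y).adjugate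
      = a x y * (W1 - W2) * (a x y).adjugate := by
    intro W1 W2; noncomm_ring
  rw [combine]
  have smul4 : (4 : ℂ) • (a x y * (Hm * Q2 p q x y - Q2 p q x y * Hm) * (a x y).adjugate)
      = a x y * ((4 : ℂ) • (Hm * Q2 p q x y - Q2 p q x y * Hm)) * (a x y).adjugate := by
    rw [Matrix.mul_smul, Matrix.smul_mul]
  rw [smul4]
  have key := key_identity (p x y) (q x y) (d1 p x y) (d1 q x y) (Q1m p q x y)
    (Q1m (d1 p) (d1 q) x y) (Q2 p q x y) _ _ rfl rfl rfl rfl rfl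
  rw [key]
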